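/- arXiv:1409.4002 — 3 statements merged into one kernel-verified Lean document; each statement's English description precedes it below -/
import Mathlib

section
/- Let H be a Hopf algebra over a field k, δ : H → k an algebra character, and σ ∈ H a group-like element with δ(σ) = 1. If the twisted antipode S_δ(h) := δ(h₍₁₎)S(h₍₂₎) satisfies S_δ² = Ad_σ (i.e. S_δ(S_δ(h)) = σ h σ⁻¹ for all h), then the one-dimensional space k, with right H-action v·h := δ(h)v and left H-coaction v ↦ σ ⊗ v, is a stable anti-Yetter-Drinfeld module over H; that is, the AYD condition ∇(v·h) = S(h₍₃₎)σh₍₁₎ ⊗ δ(h₍₂₎)v holds together with stability. -/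
/-!
Write `S_δ = S ∘ τ_δ` with `τ_δ(h) = δ(h₍₁₎)h₍₂₎`; since `τ_δ` is an algebra map, `S_δ` is an
anti-algebra map like `S`. In the convolution algebra `S_δ = δ * S`, so `S_δ * id = δ * 1 = δ`,
i.e. `S_δ(h₍₁₎)h₍₂₎ = δ(h)`. Hence, using `σ x = S_δ²(x) σ`,
`S_δ(h₍₂₎) σ h₍₁₎ = S_δ(h₍₂₎) S_δ²(h₍₁₎) σ = S_δ(S_δ(h₍₁₎) h₍₂₎) σ = S_δ(δ(h)1) σ = δ(h) σ`.
-/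

open Coalgebra HopfAlgebra WithConv

namespace HopfAlgebra

variable {k H : Type*} [CommSemiring k] [Semiring H] [HopfAlgebra k H]

noncomputable def twistedAntipode (δ : H →ₐ[k] k) : H →ₗ[k] H :=
  (TensorProduct.lid k H).toLinearMap ∘ₗ TensorProduct.map δ.toLinearMap (antipode k) ∘ₗ comul

noncomputable def leftWinding (δ : H →ₐ[k] k) : H →ₐ[k] H :=
  (Algebra.TensorProduct.lid k H).toAlgHom.comp
    ((Algebra.TensorProduct.map δ (AlgHom.id k H)).comp (Bialgebra.comulAlgHom k H))

lemma twistedAntipode_eq_antipode_comp_leftWinding (δ : H →ₐ[k] k) :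
    twistedAntipode δ = antipode k ∘ₗ (leftWinding δ).toLinearMap := by
  have h : (TensorProduct.lid k H).toLinearMap ∘ₗ TensorProduct.map δ.toLinearMap (antipode k) =
      antipode k ∘ₗ (TensorProduct.lid k H).toLinearMap ∘ₗ
        TensorProduct.map δ.toLinearMap LinearMap.id := by
    ext a b
    simp
  ext x
  exact congr($h (comul x))

lemma twistedAntipode_one (δ : H →ₐ[k] k) : twistedAntipode δ 1 = 1 := by
  simp [twistedAntipode_eq_antipode_comp_leftWinding]

lemma twistedAntipode_mul_antidistrib (δ : H →ₐ[k] k) (a b : H) :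
    twistedAntipode δ (a * b) = twistedAntipode δ b * twistedAntipode δ a := by
  simp [twistedAntipode_eq_antipode_comp_leftWinding, antipode_mul_antidistrib]

lemma toConv_twistedAntipode (δ : H →ₐ[k] k) :
    toConv (twistedAntipode δ) =
      toConv (Algebra.linearMap k H ∘ₗ δ.toLinearMap) * toConv (antipode k) := by
  ext x
  rw [(ℛ k x).convMul_apply]
  simp [twistedAntipode, ← (ℛ k x).eq, map_sum, Algebra.smul_def]

lemma sum_twistedAntipode_mul_eq_smul (δ : H →ₐ[k] k) {h : H} {ι : Type*} (r : Repr k h ι) :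
    ∑ i ∈ r.index, twistedAntipode δ (r.left i) * r.right i = δ h • 1 := by
  have : toConv (twistedAntipode δ) * toConv LinearMap.id =
      toConv (Algebra.linearMap k H ∘ₗ δ.toLinearMap) := by
    rw [toConv_twistedAntipode, mul_assoc, LinearMap.antipode_mul_id, mul_one]
  simpa [r.convMul_apply, Algebra.smul_def] using congr($this h)

lemma sum_twistedAntipode_mul_mul_eq_smul (δ : H →ₐ[k] k) {σ : H}
    (hinv : ∀ h, twistedAntipode δ (twistedAntipode δ h) * σ = σ * h)
    {h : H} {ι : Type*} (r : Repr k h ι) :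
    ∑ i ∈ r.index, twistedAntipode δ (r.right i) * σ * r.left i = δ h • σ :=
  calc ∑ i ∈ r.index, twistedAntipode δ (r.right i) * σ * r.left i
      = ∑ i ∈ r.index, twistedAntipode δ (twistedAntipode δ (r.left i) * r.right i) * σ :=
        Finset.sum_congr rfl fun i _ => by
          rw [mul_assoc, ← hinv, ← mul_assoc, twistedAntipode_mul_antidistrib]
    _ = twistedAntipode δ (δ h • 1) * σ := by
        rw [← Finset.sum_mul, ← map_sum, sum_twistedAntipode_mul_eq_smul]
    _ = δ h • σ := by rw [map_smul, twistedAntipode_one, smul_mul_assoc, one_mul]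

end HopfAlgebra

theorem mpi_gives_SAYD_on_k_general
    (k : Type*) [Field k] (H : Type*) [Ring H] [HopfAlgebra k H]
    (δ : H →ₐ[k] k) (σ : H)
    (hδσ : δ σ = 1)
    -- the twisted antipode S_δ(h) = δ(h₍₁₎)S(h₍₂₎)
    (Sδ : H →ₗ[k] H)
    (hSδ : Sδ = (TensorProduct.lid k H).toLinearMap
        ∘ₗ TensorProduct.map δ.toLinearMap (HopfAlgebra.antipode (R := k))
        ∘ₗ Coalgebra.comul)
    -- S_δ² = Ad_σ
    (hinv : ∀ h : H, Sδ (Sδ h) * σ = σ * h)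
    -- the map h ↦ δ(h₍₂₎) S(h₍₃₎) σ h₍₁₎ computing the coaction side of the AYD condition
    (F : H →ₗ[k] H)
    (hF : F = LinearMap.mul' k H
        ∘ₗ TensorProduct.map (LinearMap.mulRight k σ ∘ₗ Sδ) LinearMap.id
        ∘ₗ (TensorProduct.comm k H H).toLinearMap
        ∘ₗ Coalgebra.comul) :
    (∀ h : H, F h = δ h • σ) ∧ δ σ = 1 := by
  subst hSδ hF
  refine ⟨fun h => ?_, hδσ⟩
  rw [← sum_twistedAntipode_mul_mul_eq_smul δ hinv (ℛ k h)]
  simp [← (ℛ k h).eq, map_sum, twistedAntipode]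

/-- A modular pair in involution `(δ, σ)` gives a stable anti-Yetter–Drinfeld module
structure on the one-dimensional space `k`: if `δ : H → k` is a character, `σ ∈ H` is
group-like with `δ(σ) = 1`, and the twisted antipode `S_δ(h) = δ(h₍₁₎)S(h₍₂₎)` satisfies
`S_δ² = Ad_σ`, then the coaction of `v·h = δ(h)v` equals
`S(h₍₃₎)σh₍₁₎ ⊗ δ(h₍₂₎)v` (the AYD condition), and stability `δ(σ) = 1` holds.
The element `S(h₍₃₎) σ h₍₁₎ δ(h₍₂₎)` is encoded by the linear map `F` below. -/
theorem mpi_gives_SAYD_on_k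
    (k : Type*) [Field k] (H : Type*) [Ring H] [HopfAlgebra k H]
    (δ : H →ₐ[k] k) (σ : H)
    (hσΔ : Coalgebra.comul (R := k) σ = σ ⊗ₜ σ)
    (hσε : Coalgebra.counit (R := k) σ = 1)
    (hδσ : δ σ = 1)
    -- the twisted antipode S_δ(h) = δ(h₍₁₎)S(h₍₂₎)
    (Sδ : H →ₗ[k] H)
    (hSδ : Sδ = (TensorProduct.lid k H).toLinearMap
        ∘ₗ TensorProduct.map δ.toLinearMap (HopfAlgebra.antipode (R := k))
        ∘ₗ Coalgebra.comul)
    -- S_δ² = Ad_σ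
    (hinv : ∀ h : H, Sδ (Sδ h) * σ = σ * h)
    -- the map h ↦ δ(h₍₂₎) S(h₍₃₎) σ h₍₁₎ computing the coaction side of the AYD condition
    (F : H →ₗ[k] H)
    (hF : F = LinearMap.mul' k H
        ∘ₗ TensorProduct.map (LinearMap.mulRight k σ ∘ₗ Sδ) LinearMap.id
        ∘ₗ (TensorProduct.comm k H H).toLinearMap
        ∘ₗ Coalgebra.comul) :
    (∀ h : H, F h = δ h • σ) ∧ δ σ = 1 :=
  mpi_gives_SAYD_on_k_general k H δ σ hδσ Sδ hSδ hinv F hF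
end

section
/- In the Schwarzian Hopf algebra H_{1S} generated by X, Y, Z with [Y,X]=X, [Y,Z]=Z, [X,Z]=½Z², the element c := X⊗Y − Y⊗X − ZY⊗Y is a Hochschild 2-cocycle for trivial coefficients: b(c) = 1⊗c − (Δ⊗id)(c) + (id⊗Δ)(c) − c⊗1 = 0. -/
open TensorProduct

/-- In the Schwarzian Hopf algebra `H_{1S}`, the element `c = X⊗Y − Y⊗X − ZY⊗Y` is a
Hochschild 2-cocycle for trivial coefficients:
`b(c) = 1⊗c − (Δ⊗id)(c) + (id⊗Δ)(c) − c⊗1 = 0`. -/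
theorem schwarzian_two_cocycle
    (k : Type*) [Field k] [CharZero k] (H : Type*) [Ring H] [Algebra k H]
    (Δ : H →ₐ[k] H ⊗[k] H) (X Y Z : H)
    (relYX : Y * X - X * Y = X)
    (relYZ : Y * Z - Z * Y = Z)
    (relXZ : X * Z - Z * X = (2 : k)⁻¹ • (Z * Z))
    (hX : Δ X = X ⊗ₜ 1 + 1 ⊗ₜ X + Z ⊗ₜ Y)
    (hY : Δ Y = Y ⊗ₜ 1 + 1 ⊗ₜ Y)
    (hZ : Δ Z = Z ⊗ₜ 1 + 1 ⊗ₜ Z) :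
    (1 : H) ⊗ₜ[k] (X ⊗ₜ[k] Y - Y ⊗ₜ[k] X - (Z * Y) ⊗ₜ[k] Y)
      - (TensorProduct.assoc k H H H)
          (TensorProduct.map Δ.toLinearMap LinearMap.id
            (X ⊗ₜ[k] Y - Y ⊗ₜ[k] X - (Z * Y) ⊗ₜ[k] Y))
      + TensorProduct.map LinearMap.id Δ.toLinearMap
          (X ⊗ₜ[k] Y - Y ⊗ₜ[k] X - (Z * Y) ⊗ₜ[k] Y)
      - (TensorProduct.assoc k H H H)
          ((X ⊗ₜ[k] Y - Y ⊗ₜ[k] X - (Z * Y) ⊗ₜ[k] Y) ⊗ₜ[k] (1 : H)) = 0 := by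
  have hZY : Δ (Z * Y) = (Z * Y) ⊗ₜ 1 + Z ⊗ₜ Y + Y ⊗ₜ Z + 1 ⊗ₜ (Z * Y) := by
    rw [map_mul, hZ, hY]
    simp only [add_mul, mul_add, Algebra.TensorProduct.tmul_mul_tmul, one_mul, mul_one]
    abel
  simp only [map_sub, map_add, TensorProduct.map_tmul, TensorProduct.assoc_tmul,
    LinearMap.id_coe, id_eq, AlgHom.toLinearMap_apply, hX, hY, hZ, hZY,
    TensorProduct.tmul_add, TensorProduct.add_tmul, TensorProduct.tmul_sub,
    TensorProduct.sub_tmul]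
  abel
end

section
/- In U_q(sl₂) (rank ℓ = 1), the cyclic cohomology with coefficients in the MPI (ε, K²) satisfies: HCⁿ = 0 for n = 0, the periodicity map S : HC^{n} → HC^{n+2} is an isomorphism for n ≥ 1, and HP^{odd} = k⊕k, HP^{even} = 0, given that the coalgebra Hochschild cohomology HHⁿ(U_q(sl₂), ^σk) is k² for n = 1 and 0 otherwise. Abstractly: if a cocyclic module has Hochschild cohomology concentrated in a single degree ℓ with value k^{2^ℓ}, then Connes' SBI long exact sequence forces HCⁿ = 0 for n < ℓ, HC^{ℓ+2j} ≅ k^{2^ℓ} and HC^{ℓ+1+2j} = 0 for all j ≥ 0, hence HP^{ℓ mod 2} = k^{2^ℓ} and HP^{1−(ℓ mod 2)} = 0. -/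
/-- If the Hochschild cohomology of a cocyclic module is concentrated in a single degree `ℓ`
with value `k^{2^ℓ}`, then Connes' SBI long exact sequence
`⋯ → HHⁿ →B HC^{n−1} →S HC^{n+1} →I HH^{n+1} → ⋯` forces `HCⁿ = 0` for `n < ℓ`,
`HC^{ℓ+2j} ≅ k^{2^ℓ}` and `HC^{ℓ+1+2j} = 0` for all `j ≥ 0`, and the periodicity map `S`
is an isomorphism from degree `ℓ` on; hence `HP^{ℓ mod 2} = k^{2^ℓ}` and
`HP^{1−(ℓ mod 2)} = 0`.  (For `U_q(sl₂)`, `ℓ = 1` and `HH¹ = k²`: `HC⁰ = 0`,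
`HP^{odd} = k ⊕ k`, `HP^{even} = 0`.) -/
theorem sbi_concentrated_hochschild
    (k : Type*) [Field k] (ℓ : ℕ)
    (HH HC : ℕ → Type*)
    [∀ n, AddCommGroup (HH n)] [∀ n, Module k (HH n)]
    [∀ n, AddCommGroup (HC n)] [∀ n, Module k (HC n)]
    -- the maps of the SBI sequence (with the convention `HC⁻¹ = HC⁻² = 0`)
    (Smap : ∀ n, HC n →ₗ[k] HC (n + 2))
    (Imap : ∀ n, HC n →ₗ[k] HH n)
    (Bmap : ∀ n, HH (n + 1) →ₗ[k] HC n)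
    -- exactness of `⋯ → HCⁿ →S HC^{n+2} →I HH^{n+2} →B HC^{n+1} →S HC^{n+3} → ⋯`
    (hI0 : Function.Injective (Imap 0))
    (hI0s : Function.Surjective (Imap 0))
    (hI1 : Function.Injective (Imap 1))
    (hexactB0 : LinearMap.ker (Bmap 0) = LinearMap.range (Imap 1))
    (hexactI : ∀ n, LinearMap.ker (Imap (n + 2)) = LinearMap.range (Smap n))
    (hexactB : ∀ n, LinearMap.ker (Bmap (n + 1)) = LinearMap.range (Imap (n + 2)))
    (hexactS : ∀ n, LinearMap.ker (Smap n) = LinearMap.range (Bmap n))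
    -- `HH` is concentrated in degree `ℓ` with value `k^{2^ℓ}`
    (hHHl : Nonempty ((HH ℓ) ≃ₗ[k] (Fin (2 ^ ℓ) → k)))
    (hHH : ∀ n, n ≠ ℓ → ∀ x : HH n, x = 0) :
    (∀ n, n < ℓ → ∀ x : HC n, x = 0) ∧
    Nonempty ((HC ℓ) ≃ₗ[k] (Fin (2 ^ ℓ) → k)) ∧
    (∀ j : ℕ, Nonempty ((HC (ℓ + 2 * j)) ≃ₗ[k] (Fin (2 ^ ℓ) → k))) ∧
    (∀ j : ℕ, ∀ x : HC (ℓ + 1 + 2 * j), x = 0) ∧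
    -- the periodicity map is an isomorphism from degree `ℓ` on, so that the periodic
    -- cyclic cohomology `HP^ε = colim (HC^{ε+2j}, S)` is `k^{2^ℓ}` in parity `ℓ mod 2`
    -- and `0` in parity `1 − (ℓ mod 2)`
    (∀ n, ℓ ≤ n → Function.Bijective (Smap n)) := by

  have hSinj : ∀ n, n + 1 ≠ ℓ → Function.Injective (Smap n) := by
    intro n hn x y hxy
    have hmem : x - y ∈ LinearMap.ker (Smap n) := by
      simp [LinearMap.mem_ker, map_sub, hxy]
    rw [hexactS n] at hmem
    obtain ⟨z, hz⟩ := hmem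
    rw [hHH (n + 1) hn z, map_zero] at hz
    exact sub_eq_zero.mp hz.symm
  have hSsurj : ∀ n, n + 2 ≠ ℓ → Function.Surjective (Smap n) := by
    intro n hn x
    have hmem : x ∈ LinearMap.ker (Imap (n + 2)) := hHH (n + 2) hn _
    rw [hexactI n] at hmem
    exact hmem
  have hZ : ∀ n, n < ℓ → ∀ x : HC n, x = 0 := by
    intro n
    induction n using Nat.strong_induction_on with
    | _ n ih =>
      match n, ih with
      | 0, ih =>
        intro hn x
        apply hI0
        rw [map_zero]
        exact hHH 0 (by omega) _
      | 1, ih =>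
        intro hn x
        apply hI1
        rw [map_zero]
        exact hHH 1 (by omega) _
      | (m + 2), ih =>
        intro hn x
        have hmem : x ∈ LinearMap.ker (Imap (m + 2)) := hHH (m + 2) (by omega) _
        rw [hexactI m] at hmem
        obtain ⟨y, hy⟩ := hmem
        rw [ih m (by omega) (by omega) y, map_zero] at hy
        exact hy.symm
  have hSbij : ∀ n, ℓ ≤ n → Function.Bijective (Smap n) := fun n hn =>
    ⟨hSinj n (by omega), hSsurj n (by omega)⟩
  have hIbij : Function.Bijective (Imap ℓ) := by
    rcases ℓ with _ | _ | m
    · exact ⟨hI0, hI0s⟩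
    · refine ⟨hI1, ?_⟩
      intro x
      have hmem : x ∈ LinearMap.ker (Bmap 0) := hZ 0 (by omega) _
      rw [hexactB0] at hmem
      exact hmem
    · constructor
      · intro a b hab
        have hmem : a - b ∈ LinearMap.ker (Imap (m + 2)) := by
          simp [LinearMap.mem_ker, map_sub, hab]
        rw [hexactI m] at hmem
        obtain ⟨y, hy⟩ := hmem
        rw [hZ m (by omega) y, map_zero] at hy
        exact sub_eq_zero.mp hy.symm
      · intro x
        have hmem : x ∈ LinearMap.ker (Bmap (m + 1)) := hZ (m + 1) (by omega) _
        rw [hexactB m] at hmem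
        exact hmem
  have hHCl1 : ∀ x : HC (ℓ + 1), x = 0 := by
    rcases ℓ with _ | m
    · intro x
      apply hI1
      rw [map_zero]
      exact hHH 1 (by omega) _
    · intro x
      have hmem : x ∈ LinearMap.ker (Imap (m + 2)) := hHH (m + 2) (by omega) _
      rw [hexactI m] at hmem
      obtain ⟨y, hy⟩ := hmem
      rw [hZ m (by omega) y, map_zero] at hy
      exact hy.symm
  have e0 : (HC ℓ) ≃ₗ[k] (Fin (2 ^ ℓ) → k) :=
    (LinearEquiv.ofBijective (Imap ℓ) hIbij).trans hHHl.some
  refine ⟨hZ, ⟨e0⟩, ?_, ?_, hSbij⟩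
  · intro j
    induction j with
    | zero => rw [show ℓ + 2 * 0 = ℓ from by ring]; exact ⟨e0⟩
    | succ j ih =>
      obtain ⟨e⟩ := ih
      rw [show ℓ + 2 * (j + 1) = ℓ + 2 * j + 2 from by ring]
      exact ⟨(LinearEquiv.ofBijective (Smap (ℓ + 2 * j)) (hSbij _ (by omega))).symm.trans e⟩
  · intro j
    induction j with
    | zero => rw [show ℓ + 1 + 2 * 0 = ℓ + 1 from by ring]; exact hHCl1
    | succ j ih =>
      rw [show ℓ + 1 + 2 * (j + 1) = ℓ + 1 + 2 * j + 2 from by ring]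
      intro x
      obtain ⟨y, hy⟩ := (hSbij (ℓ + 1 + 2 * j) (by omega)).2 x
      rw [ih y, map_zero] at hy
      exact hy.symm
end
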